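/- arXiv:1512.01399 — 2 statements merged into one kernel-verified Lean document; each statement's English description precedes it below -/
import Mathlib

section
/- Let λ ∈ [0, (n-1)²/4] and r = (n-1)/2 + (n-1)/2·√(1 - 4λ/(n-1)²). Then there exist d₀ > 0 and C₃ > 0 and a solution h : (0,∞) → ℝ of the ODE h''(d) + (n-1)·tanh(d)·h'(d) = -λ·h(d) such that h is positive and decreasing on [d₀, ∞) and h(d) < C₃·e^{-r·d} for all d > d₀. -/
/-!
Write `ν = n - 1` and `z = e^{-2d}`. Since `tanh d = (1 - z) / (1 + z)`, multiplying the equation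
by `1 + z` gives coefficients that are polynomial in `z`, so we look for a Frobenius series at
`d = ∞`, `h = ∑ a_k e^{-(r + 2k) d}`, where `r` is the larger root of the indicial polynomial
`χ(s) = s² - ν s + λ`. The coefficient of `e^{-(r + 2k) d}` in `(1 + z) (h'' + ν tanh · h' + λ h)`
is `a_k χ(r + 2k) + a_{k-1} χ(-(r + 2k - 2))`, and since `χ(r + x) = x (x + √(ν² - 4λ))` does not
vanish for `x > 0` this recurrence determines `a_{k+1}` from `a_k`. The ratio bound
`|a_{k+1} / a_k| ≤ ((k + ν) / (k + 1))²` gives polynomial growth, so the series may be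
differentiated termwise for `d > 0`. Finally `e^{rd} h(d) → a_0 = 1` and `e^{rd} h'(d) → -r < 0`,
which yields positivity, monotonicity and `h < 2 e^{-rd}` on a tail `[d₀, ∞)`.
-/

open Real Filter Topology Asymptotics Set

noncomputable def expSeries (r : ℝ) (c : ℕ → ℝ) (d : ℝ) : ℝ :=
  ∑' k : ℕ, c k * exp (-(r + 2 * k) * d)

def expSeriesDerivCoeff (r : ℝ) (c : ℕ → ℝ) (k : ℕ) : ℝ :=
  -(r + 2 * k) * c k

section ExpSeries

variable {r : ℝ} {c : ℕ → ℝ} {M : ℕ}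

lemma isBigO_affine_natCast (a b : ℝ) :
    (fun k : ℕ => a + b * k) =O[atTop] (fun k : ℕ => (k : ℝ)) :=
  ((isLittleO_const_id_atTop a).isBigO.add ((isBigO_refl id atTop).const_mul_left b)).natCast_atTop

lemma exp_neg_add_two_mul_mul (r d : ℝ) (k : ℕ) :
    exp (-(r + 2 * k) * d) = exp (-r * d) * exp (-(2 * d) * k) := by
  rw [← exp_add]; ring_nf

lemma summable_norm_mul_exp (hc : c =O[atTop] fun k => (k : ℝ) ^ M) (r : ℝ) {δ : ℝ}
    (hδ : 0 < δ) : Summable fun k => ‖c k‖ * exp (-(r + 2 * k) * δ) := by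
  have hgeom : Summable fun k : ℕ => (k : ℝ) ^ M * exp (-(2 * δ) * k) :=
    summable_pow_mul_exp_neg_nat_mul M (by positivity)
  refine ((summable_of_isBigO_nat hgeom (hc.norm_left.mul (isBigO_refl _ _))).mul_left
    (exp (-r * δ))).congr fun k => ?_
  rw [exp_neg_add_two_mul_mul]; ring

lemma hasSum_expSeries {d : ℝ} (hd : 0 < d) (hc : c =O[atTop] fun k => (k : ℝ) ^ M) :
    HasSum (fun k => c k * exp (-(r + 2 * k) * d)) (expSeries r c d) :=
  (Summable.of_norm (by simpa [norm_mul] using summable_norm_mul_exp hc r hd)).hasSum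

lemma isBigO_expSeriesDerivCoeff (r : ℝ) (hc : c =O[atTop] fun k => (k : ℝ) ^ M) :
    expSeriesDerivCoeff r c =O[atTop] fun k => (k : ℝ) ^ (M + 1) := by
  have := (isBigO_affine_natCast (-r) (-2)).mul hc
  refine this.congr (fun k => ?_) (fun k => ?_)
  · simp only [expSeriesDerivCoeff]; ring
  · ring

lemma norm_mul_exp_le_of_le (hr : 0 ≤ r) (a : ℝ) (k : ℕ) {δ y : ℝ} (hy : δ ≤ y) :
    ‖a * exp (-(r + 2 * k) * y)‖ ≤ ‖a‖ * exp (-(r + 2 * k) * δ) := by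
  rw [norm_mul, norm_of_nonneg (exp_nonneg _)]
  gcongr ‖a‖ * ?_
  exact exp_le_exp.2 (by nlinarith [(Nat.cast_nonneg k : (0 : ℝ) ≤ k)])

lemma hasDerivAt_expSeries (hr : 0 ≤ r) (hc : c =O[atTop] fun k => (k : ℝ) ^ M) {d : ℝ}
    (hd : 0 < d) : HasDerivAt (expSeries r c) (expSeries r (expSeriesDerivCoeff r c) d) d := by
  unfold expSeries
  refine hasDerivAt_tsum_of_isPreconnected (g := fun k y => c k * exp (-(r + 2 * k) * y))
    (g' := fun k y => expSeriesDerivCoeff r c k * exp (-(r + 2 * k) * y))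
    (summable_norm_mul_exp (isBigO_expSeriesDerivCoeff r hc) r (half_pos hd)) isOpen_Ioi
    isPreconnected_Ioi (fun k y _ => ?_) (fun k y hy => ?_) (mem_Ioi.2 (half_lt_self hd))
    (hasSum_expSeries hd hc).summable (mem_Ioi.2 (half_lt_self hd))
  · refine (((hasDerivAt_id y).const_mul (-(r + 2 * k))).exp.const_mul (c k)).congr_deriv ?_
    simp only [expSeriesDerivCoeff, id]; ring
  · exact norm_mul_exp_le_of_le hr _ k (le_of_lt hy)

lemma hasDerivAt_deriv_expSeries (hr : 0 ≤ r) (hc : c =O[atTop] fun k => (k : ℝ) ^ M) {d : ℝ}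
    (hd : 0 < d) :
    HasDerivAt (deriv (expSeries r c))
      (expSeries r (expSeriesDerivCoeff r (expSeriesDerivCoeff r c)) d) d := by
  refine (hasDerivAt_expSeries hr (isBigO_expSeriesDerivCoeff r hc) hd).congr_of_eventuallyEq ?_
  filter_upwards [Ioi_mem_nhds hd] with y hy
  exact (hasDerivAt_expSeries hr hc hy).deriv

lemma tendsto_exp_mul_expSeries (hc : c =O[atTop] fun k => (k : ℝ) ^ M) :
    Tendsto (fun d => exp (r * d) * expSeries r c d) atTop (𝓝 (c 0)) := by
  have hlim : Tendsto (fun d => ∑' k : ℕ, c k * exp (-(0 + 2 * k) * d)) atTop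
      (𝓝 (∑' k : ℕ, if k = 0 then c 0 else 0)) := by
    refine tendsto_tsum_of_dominated_convergence (summable_norm_mul_exp hc 0 one_pos)
      (fun k => ?_) ?_
    · rcases Nat.eq_zero_or_pos k with rfl | hk
      · simp
      · have hk' : -(0 + 2 * (k : ℝ)) < 0 := by simp [hk]
        simpa [hk.ne'] using
          ((tendsto_exp_atBot.comp (tendsto_id.const_mul_atTop_of_neg hk')).const_mul (c k))
    · filter_upwards [eventually_ge_atTop 1] with d hd k
      exact norm_mul_exp_le_of_le le_rfl _ k hd
  rw [tsum_ite_eq] at hlim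
  refine hlim.congr' ?_
  filter_upwards [eventually_gt_atTop 0] with d hd
  rw [expSeries, ← tsum_mul_left]
  congr 1 with k
  rw [mul_left_comm, ← exp_add]; ring_nf

lemma exists_expSeries_pos_antitoneOn_lt (hr : 0 < r) (hc : c =O[atTop] fun k => (k : ℝ) ^ M)
    (hc0 : 0 < c 0) :
    ∃ d₀ > 0, (∀ d ∈ Ici d₀, 0 < expSeries r c d) ∧ AntitoneOn (expSeries r c) (Ici d₀) ∧
      ∀ d > d₀, expSeries r c d < 2 * c 0 * exp (-r * d) := by
  have hval := (tendsto_exp_mul_expSeries (r := r) hc).eventually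
    (Ioo_mem_nhds hc0 (by linarith : c 0 < 2 * c 0))
  have hslope : expSeriesDerivCoeff r c 0 < 0 := by
    simp only [expSeriesDerivCoeff, CharP.cast_eq_zero, mul_zero, add_zero, neg_mul]
    exact neg_neg_of_pos (mul_pos hr hc0)
  have hder := (tendsto_exp_mul_expSeries (r := r) (isBigO_expSeriesDerivCoeff r hc)).eventually
    (gt_mem_nhds hslope)
  obtain ⟨D, hD⟩ := eventually_atTop.1 (hval.and hder)
  have hpos : ∀ d ∈ Ici (max D 1), 0 < d := fun d hd =>
    zero_lt_one.trans_le ((le_max_right D 1).trans hd)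
  have hge : ∀ d ∈ Ici (max D 1), D ≤ d := fun d hd => (le_max_left D 1).trans hd
  refine ⟨max D 1, hpos _ self_mem_Ici, fun d hd => ?_, ?_, fun d hd => ?_⟩
  · exact pos_of_mul_pos_right (hD d (hge d hd)).1.1 (exp_pos _).le
  · refine antitoneOn_of_hasDerivWithinAt_nonpos (f' := expSeries r (expSeriesDerivCoeff r c))
      (convex_Ici _)
      (fun d hd => (hasDerivAt_expSeries hr.le hc (hpos d hd)).continuousAt.continuousWithinAt)
      (fun d hd => ?_) (fun d hd => ?_) <;> rw [interior_Ici] at hd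
    · exact (hasDerivAt_expSeries hr.le hc (hpos d (Ioi_subset_Ici_self hd))).hasDerivWithinAt
    · exact (neg_of_mul_neg_right (hD d (hge d (Ioi_subset_Ici_self hd))).2 (exp_pos _).le).le
  · have hlt := (hD d (hge d (le_of_lt hd))).1.2
    rw [neg_mul, exp_neg, ← div_eq_mul_inv, lt_div_iff₀ (exp_pos _), mul_comm]
    exact hlt

lemma hasSum_quadratic_expSeries (hc : c =O[atTop] fun k => (k : ℝ) ^ M) {d : ℝ} (hd : 0 < d)
    (p q : ℝ) :
    HasSum (fun k => c k * ((r + 2 * k) ^ 2 - p * (r + 2 * k) + q) * exp (-(r + 2 * k) * d))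
      (expSeries r (expSeriesDerivCoeff r (expSeriesDerivCoeff r c)) d +
        p * expSeries r (expSeriesDerivCoeff r c) d + q * expSeries r c d) := by
  have hc' := isBigO_expSeriesDerivCoeff r hc
  refine (((hasSum_expSeries hd (isBigO_expSeriesDerivCoeff r hc')).add
    ((hasSum_expSeries hd hc').mul_left p)).add ((hasSum_expSeries hd hc).mul_left q)).congr_fun
    fun k => ?_
  simp only [expSeriesDerivCoeff]; ring

lemma add_exp_mul_eq_zero_of_hasSum {u v : ℕ → ℝ} {U V d : ℝ}
    (hu : HasSum (fun k => u k * exp (-(r + 2 * k) * d)) U)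
    (hv : HasSum (fun k => v k * exp (-(r + 2 * k) * d)) V)
    (hu0 : u 0 = 0) (hsucc : ∀ k, u (k + 1) = -v k) : U + exp (-2 * d) * V = 0 := by
  have htail := (hasSum_nat_add_iff' 1).2 hu
  simp only [Finset.range_one, Finset.sum_singleton, hu0, zero_mul, sub_zero] at htail
  have hterm : (fun k : ℕ => u (k + 1) * exp (-(r + 2 * ↑(k + 1)) * d)) =
      fun k => -exp (-2 * d) * (v k * exp (-(r + 2 * k) * d)) := by
    ext k
    have hexp : exp (-(r + 2 * ↑(k + 1)) * d) = exp (-2 * d) * exp (-(r + 2 * k) * d) := by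
      rw [← exp_add]; push_cast; ring_nf
    rw [hsucc, hexp]; ring
  have hshift := hv.mul_left (-exp (-2 * d))
  rw [← hterm] at hshift
  linear_combination htail.unique hshift

end ExpSeries

namespace HyperballProfile

variable (ν lam : ℝ)

noncomputable def disc : ℝ := √(ν ^ 2 - 4 * lam)

noncomputable def decayRate : ℝ := (ν + disc ν lam) / 2

def indicial (s : ℝ) : ℝ := s ^ 2 - ν * s + lam

noncomputable def coeff : ℕ → ℝ
  | 0 => 1
  | k + 1 => -coeff k * indicial ν lam (-(decayRate ν lam + 2 * k)) /
      indicial ν lam (decayRate ν lam + 2 * (k + 1))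

variable {ν lam}

lemma coeff_zero : coeff ν lam 0 = 1 := rfl

lemma half_add_half_mul_sqrt_eq_decayRate (hν : 0 < ν) :
    ν / 2 + ν / 2 * √(1 - 4 * lam / ν ^ 2) = decayRate ν lam := by
  rw [one_sub_div (by positivity), sqrt_div' _ (sq_nonneg ν), sqrt_sq hν.le, decayRate, disc]
  field_simp

lemma disc_nonneg : 0 ≤ disc ν lam := sqrt_nonneg _

lemma disc_sq (h4 : 4 * lam ≤ ν ^ 2) : disc ν lam ^ 2 = ν ^ 2 - 4 * lam :=
  sq_sqrt (by linarith)

lemma disc_le (h0 : 0 ≤ lam) (hν : 0 ≤ ν) : disc ν lam ≤ ν :=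
  (sqrt_le_left hν).2 (by linarith)

lemma decayRate_le (h0 : 0 ≤ lam) (hν : 0 ≤ ν) : decayRate ν lam ≤ ν := by
  have := disc_le h0 hν; unfold decayRate; linarith

lemma decayRate_nonneg (hν : 0 ≤ ν) : 0 ≤ decayRate ν lam := by
  have := disc_nonneg (ν := ν) (lam := lam); unfold decayRate; positivity

lemma decayRate_pos (hν : 0 < ν) : 0 < decayRate ν lam := by
  have := disc_nonneg (ν := ν) (lam := lam); unfold decayRate; positivity

lemma indicial_decayRate_add (h4 : 4 * lam ≤ ν ^ 2) (x : ℝ) :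
    indicial ν lam (decayRate ν lam + x) = x * (x + disc ν lam) := by
  unfold indicial decayRate; linear_combination (1 / 4 : ℝ) * disc_sq h4

lemma indicial_neg_decayRate_add (h4 : 4 * lam ≤ ν ^ 2) (x : ℝ) :
    indicial ν lam (-(decayRate ν lam + x)) = (x + 2 * decayRate ν lam) * (x + ν) := by
  unfold indicial decayRate; linear_combination (1 / 4 : ℝ) * disc_sq h4

lemma abs_coeff_succ_le (h0 : 0 ≤ lam) (hν : 0 ≤ ν) (h4 : 4 * lam ≤ ν ^ 2) (k : ℕ) :
    |coeff ν lam (k + 1)| ≤ |coeff ν lam k| * ((k + ν) / (k + 1)) ^ 2 := by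
  have hD := disc_nonneg (ν := ν) (lam := lam)
  have hr := decayRate_le h0 hν
  have hr0 := decayRate_nonneg (lam := lam) hν
  have hk : (0 : ℝ) ≤ k := k.cast_nonneg
  have hnum : 0 ≤ (2 * k + 2 * decayRate ν lam) * (2 * k + ν) := by positivity
  have hden : 0 < 2 * (k + 1) * (2 * (k + 1) + disc ν lam) := by positivity
  rw [coeff, indicial_neg_decayRate_add h4, indicial_decayRate_add h4, abs_div, abs_mul,
    abs_neg, abs_of_nonneg hnum, abs_of_pos hden, mul_div_assoc]
  gcongr
  rw [div_pow, div_le_div_iff₀ (by positivity) (by positivity)]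
  have hnum_le : (2 * k + 2 * decayRate ν lam) * (2 * k + ν) ≤ 4 * (k + ν) ^ 2 := by nlinarith
  have hden_ge : 4 * (k + 1) ^ 2 ≤ 2 * (k + 1) * (2 * (k + 1) + disc ν lam) := by nlinarith
  nlinarith [sq_nonneg ((k : ℝ) + 1), sq_nonneg ((k : ℝ) + ν)]

lemma add_div_succ_le_pow {ν : ℝ} {N : ℕ} (hN : ν ≤ N + 1) (k : ℕ) :
    (k + ν) / (k + 1) ≤ ((k + 2) / (k + 1)) ^ N := by
  have hk : (0 : ℝ) < k + 1 := by positivity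
  have hbern := one_add_mul_le_pow (a := 1 / ((k : ℝ) + 1))
    (by linarith [one_div_pos.2 hk]) N
  calc (k + ν) / (k + 1) ≤ 1 + N * (1 / ((k : ℝ) + 1)) := by
        rw [div_le_iff₀ hk]; field_simp; linarith
    _ ≤ (1 + 1 / ((k : ℝ) + 1)) ^ N := hbern
    _ = ((k + 2) / (k + 1)) ^ N := by congr 1; field_simp; ring

lemma abs_coeff_le (h0 : 0 ≤ lam) (hν : 0 ≤ ν) (h4 : 4 * lam ≤ ν ^ 2) (k : ℕ) :
    |coeff ν lam k| ≤ ((k : ℝ) + 1) ^ (2 * ⌈ν⌉₊) := by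
  induction k with
  | zero => simp [coeff]
  | succ k ih =>
    have hratio := add_div_succ_le_pow (by linarith [Nat.le_ceil ν]) k (ν := ν)
    have hk : (0 : ℝ) < k + 1 := by positivity
    calc |coeff ν lam (k + 1)| ≤ |coeff ν lam k| * ((k + ν) / (k + 1)) ^ 2 :=
          abs_coeff_succ_le h0 hν h4 k
      _ ≤ ((k : ℝ) + 1) ^ (2 * ⌈ν⌉₊) * (((k + 2) / (k + 1)) ^ ⌈ν⌉₊) ^ 2 := by
          gcongr
      _ = (((k + 1 : ℕ) : ℝ) + 1) ^ (2 * ⌈ν⌉₊) := by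
          rw [← pow_mul, mul_comm ⌈ν⌉₊ 2, ← mul_pow, mul_div_cancel₀ _ hk.ne']
          push_cast; ring

lemma isBigO_coeff (h0 : 0 ≤ lam) (hν : 0 ≤ ν) (h4 : 4 * lam ≤ ν ^ 2) :
    coeff ν lam =O[atTop] fun k => (k : ℝ) ^ (2 * ⌈ν⌉₊) := by
  refine (IsBigO.of_bound 1 (Eventually.of_forall fun k => ?_)).trans
    ((isBigO_affine_natCast 1 1).pow _)
  rw [one_mul, norm_pow, Real.norm_eq_abs, Real.norm_eq_abs, one_mul, add_comm,
    abs_of_nonneg (by positivity : (0 : ℝ) ≤ k + 1)]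
  exact abs_coeff_le h0 hν h4 k

lemma coeff_succ_mul_indicial (h4 : 4 * lam ≤ ν ^ 2) (k : ℕ) :
    coeff ν lam (k + 1) * indicial ν lam (decayRate ν lam + 2 * ↑(k + 1)) =
      -(coeff ν lam k * indicial ν lam (-(decayRate ν lam + 2 * k))) := by
  have hP : indicial ν lam (decayRate ν lam + 2 * ↑(k + 1)) ≠ 0 := by
    have := disc_nonneg (ν := ν) (lam := lam)
    rw [indicial_decayRate_add h4]; positivity
  rw [coeff, Nat.cast_succ, div_mul_cancel₀ _ (by rwa [Nat.cast_succ] at hP)]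
  ring

lemma tanh_mul_one_add_exp (d : ℝ) : tanh d * (1 + exp (-2 * d)) = 1 - exp (-2 * d) := by
  have hsum : exp d + exp (-d) ≠ 0 := by positivity
  have hinv : exp d * exp (-d) = 1 := by rw [← exp_add, add_neg_cancel, exp_zero]
  have hsq : exp (-2 * d) = exp (-d) * exp (-d) := by rw [← exp_add]; ring_nf
  rw [tanh_eq, hsq, div_mul_eq_mul_div, div_eq_iff hsum]
  linear_combination 2 * exp (-d) * hinv

lemma expSeries_coeff_ode (h0 : 0 ≤ lam) (hν : 0 ≤ ν) (h4 : 4 * lam ≤ ν ^ 2) {d : ℝ}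
    (hd : 0 < d) :
    deriv (deriv (expSeries (decayRate ν lam) (coeff ν lam))) d +
        ν * tanh d * deriv (expSeries (decayRate ν lam) (coeff ν lam)) d =
      -lam * expSeries (decayRate ν lam) (coeff ν lam) d := by
  have ha := isBigO_coeff h0 hν h4
  have hr := decayRate_nonneg (lam := lam) hν
  rw [(hasDerivAt_deriv_expSeries hr ha hd).deriv, (hasDerivAt_expSeries hr ha hd).deriv]
  set r := decayRate ν lam
  have hv := (hasSum_quadratic_expSeries ha hd (-ν) lam).congr_fun
    (g := fun k => coeff ν lam k * indicial ν lam (-(r + 2 * k)) * exp (-(r + 2 * k) * d))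
    fun k => by simp only [indicial]; ring
  have htele := add_exp_mul_eq_zero_of_hasSum
    (u := fun k => coeff ν lam k * indicial ν lam (r + 2 * k))
    (hasSum_quadratic_expSeries ha hd ν lam) hv
    (by rw [Nat.cast_zero, mul_zero, indicial_decayRate_add h4, zero_mul, mul_zero])
    (coeff_succ_mul_indicial h4)
  refine mul_left_cancel₀ (by positivity : 1 + exp (-2 * d) ≠ 0) ?_
  linear_combination htele +
    ν * expSeries r (expSeriesDerivCoeff r (coeff ν lam)) d * tanh_mul_one_add_exp d

end HyperballProfile

open HyperballProfile in
/-- For `λ ∈ [0, (n-1)²/4]` and `r = (n-1)/2 + (n-1)/2·√(1 - 4λ/(n-1)²)`, there exist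
`d₀ > 0`, `C₃ > 0` and a solution `h` of `h'' + (n-1)·tanh(d)·h' = -λ·h` on `(0,∞)` that is
positive and decreasing on `[d₀,∞)` and satisfies `h(d) < C₃·e^{-r d}` for all `d > d₀`. -/
theorem exists_hyperball_eigen_profile (n : ℕ) (hn : 2 ≤ n) (lam : ℝ)
    (hlam0 : 0 ≤ lam) (hlam1 : lam ≤ ((n : ℝ) - 1) ^ 2 / 4) :
    ∃ d₀ > (0:ℝ), ∃ C₃ > (0:ℝ), ∃ h : ℝ → ℝ,
      (∀ d > (0:ℝ), DifferentiableAt ℝ h d ∧ DifferentiableAt ℝ (deriv h) d ∧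
        deriv (deriv h) d + ((n : ℝ) - 1) * Real.tanh d * deriv h d = -lam * h d) ∧
      (∀ d ∈ Set.Ici d₀, 0 < h d) ∧
      AntitoneOn h (Set.Ici d₀) ∧
      (∀ d > d₀, h d < C₃ *
        Real.exp (-(((n : ℝ) - 1) / 2 +
          ((n : ℝ) - 1) / 2 * Real.sqrt (1 - 4 * lam / ((n : ℝ) - 1) ^ 2)) * d)) := by
  set ν : ℝ := (n : ℝ) - 1
  have hν : 1 ≤ ν := by
    have : (2 : ℝ) ≤ n := by exact_mod_cast hn
    linarith
  have h4 : 4 * lam ≤ ν ^ 2 := by linarith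
  have ha := isBigO_coeff hlam0 (by linarith) h4
  have hr := decayRate_pos (lam := lam) (by linarith : 0 < ν)
  obtain ⟨d₀, hd₀, hpos, hanti, hlt⟩ :=
    exists_expSeries_pos_antitoneOn_lt hr ha (by rw [coeff_zero]; exact one_pos)
  refine ⟨d₀, hd₀, 2, two_pos, expSeries (decayRate ν lam) (coeff ν lam), fun d hd => ?_, hpos,
    hanti, fun d hd => ?_⟩
  · exact ⟨(hasDerivAt_expSeries hr.le ha hd).differentiableAt,
      (hasDerivAt_deriv_expSeries hr.le ha hd).differentiableAt,
      expSeries_coeff_ode hlam0 (by linarith) h4 hd⟩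
  · rw [half_add_half_mul_sqrt_eq_decayRate (by linarith)]
    simpa only [coeff_zero, mul_one] using hlt d hd
end

section
/- Let s ∈ ((n-1)/2, n-1) and Λ ⊂ ∂B (sphere in ℝ^n) be a set with H^s(Λ) < ∞ admitting a constant K > 0 such that H^s(Λ ∩ B_r(p)) ≤ K·r^s for all p ∈ Λ and r > 0. Then there is a constant M depending only on n and s such that for every x in the open unit ball B, ∫_Λ ((1-|x|²)/|z-x|²)^{(n-1)/2}·|ln((1-|x|²)/|z-x|²)| dH^s(z) ≤ M·K. Moreover the integral is bounded by K₁·δ^{s-(n-1)/2}·ln(128/δ³) where δ = 1-|x| and K₁ depends only on n, s, K. -/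
/-!
Cut the sphere into the dyadic shells `2^j δ ≤ |z - x| < 2^(j+1) δ` around `x`, where
`δ = 1 - |x|`; no point of the sphere is closer to `x` than `δ`. On the `j`-th shell the ratio
`t = (1 - |x|²)/|z - x|²` lies between `δ/4` and `2/(4^j δ)`, so the integrand `t^a |log t|`,
`a = (n-1)/2`, is at most `(2/(4^j δ))^a log(4/δ)`, while the upper density bound gives the shell
measure `≤ K (2^(j+2) δ)^s`. The resulting series is geometric with ratio `2^(s - 2a) < 1`,
whence the bound `K₁ K δ^(s-a) log(4/δ)`. Since `s > a`, `δ^(s-a) log(128/δ³)` stays bounded on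
`(0, 1]`, which gives the bound `M K` uniform in `x`.
-/

open MeasureTheory Metric

def dyadicAnnulus {X : Type*} [PseudoMetricSpace X] (x : X) (ρ : ℝ) (j : ℕ) : Set X :=
  ball x (2 ^ (j + 1) * ρ) \ ball x (2 ^ j * ρ)

section Dyadic

variable {X : Type*} [PseudoMetricSpace X]

theorem ball_union_iUnion_dyadicAnnulus {x : X} {ρ : ℝ} (hρ : 0 < ρ) :
    ball x ρ ∪ ⋃ j, dyadicAnnulus x ρ j = Set.univ := by
  refine Set.eq_univ_of_forall fun z => ?_
  have hex : ∃ j : ℕ, dist z x < 2 ^ j * ρ := by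
    obtain ⟨j, hj⟩ := pow_unbounded_of_one_lt (dist z x / ρ) one_lt_two
    exact ⟨j, (div_lt_iff₀ hρ).1 hj⟩
  classical
  rcases h : Nat.find hex with _ | j
  · left
    simpa [h] using Nat.find_spec hex
  · right
    refine Set.mem_iUnion.2 ⟨j, ?_, ?_⟩
    · simpa [h] using Nat.find_spec hex
    · exact Nat.find_min hex (by omega)

theorem lintegral_le_tsum_setLIntegral_dyadicAnnulus [MeasurableSpace X] {μ : Measure X}
    {x : X} {ρ : ℝ} (hρ : 0 < ρ) (hμ : μ (ball x ρ) = 0) (f : X → ENNReal) :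
    ∫⁻ z, f z ∂μ ≤ ∑' j, ∫⁻ z in dyadicAnnulus x ρ j, f z ∂μ :=
  calc ∫⁻ z, f z ∂μ = ∫⁻ z in ball x ρ ∪ ⋃ j, dyadicAnnulus x ρ j, f z ∂μ := by
        rw [ball_union_iUnion_dyadicAnnulus hρ, Measure.restrict_univ]
    _ ≤ ∫⁻ z in ball x ρ, f z ∂μ + ∫⁻ z in ⋃ j, dyadicAnnulus x ρ j, f z ∂μ :=
        lintegral_union_le _ _ _
    _ ≤ ∑' j, ∫⁻ z in dyadicAnnulus x ρ j, f z ∂μ := by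
        rw [setLIntegral_measure_zero _ _ hμ, zero_add]
        exact lintegral_iUnion_le _ _

theorem measure_inter_ball_le_of_forall_mem_center [MeasurableSpace X] {μ : Measure X}
    {Λ : Set X} {K s : ℝ}
    (hμΛ : ∀ p ∈ Λ, ∀ r > (0:ℝ), μ (Λ ∩ ball p r) ≤ ENNReal.ofReal (K * r ^ s))
    (x : X) {r : ℝ} (hr : 0 < r) : μ (Λ ∩ ball x r) ≤ ENNReal.ofReal (K * (2 * r) ^ s) := by
  rcases (Λ ∩ ball x r).eq_empty_or_nonempty with he | ⟨p, hpΛ, hpx⟩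
  · simp [he]
  refine (measure_mono ?_).trans (hμΛ p hpΛ _ (by positivity))
  rintro q ⟨hqΛ, hqx⟩
  refine ⟨hqΛ, ?_⟩
  rw [mem_ball] at hpx hqx ⊢
  linarith [dist_triangle_right q p x]

end Dyadic

theorem rpow_mul_abs_log_le {a t b c : ℝ} (ha : 0 ≤ a) (ht : 0 < t) (hct : c⁻¹ ≤ t)
    (htb : t ≤ b) (hbc : b ≤ c) : t ^ a * |Real.log t| ≤ b ^ a * Real.log c := by
  have hc : 0 < c := (ht.trans_le htb).trans_le hbc
  have habs : |Real.log t| ≤ Real.log c := by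
    refine abs_le.2 ⟨?_, Real.log_le_log ht (htb.trans hbc)⟩
    rw [← Real.log_inv]
    exact Real.log_le_log (inv_pos.2 hc) hct
  exact mul_le_mul (Real.rpow_le_rpow ht.le htb ha) habs (abs_nonneg _)
    (Real.rpow_nonneg (ht.le.trans htb) _)

theorem rpow_mul_log_div_pow_le {δ b : ℝ} (hδ0 : 0 < δ) (hδ1 : δ ≤ 1) (hb : 0 < b) :
    δ ^ b * Real.log (128 / δ ^ 3) ≤ Real.log 128 + 3 / b := by
  have hδb : δ ^ b ≤ 1 := Real.rpow_le_one hδ0.le hδ1 hb.le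
  have hlog128 : 0 ≤ Real.log 128 := Real.log_nonneg (by norm_num)
  have hlogδ : -(Real.log δ * δ ^ b) < 1 / b :=
    (neg_le_abs _).trans_lt (Real.abs_log_mul_self_rpow_lt δ b hδ0 hδ1 hb)
  rw [Real.log_div (by norm_num) (by positivity), Real.log_pow]
  have : δ ^ b * Real.log 128 ≤ Real.log 128 := mul_le_of_le_one_left hlog128 hδb
  have h3 : 3 / b = 3 * (1 / b) := by ring
  push_cast
  linarith

theorem two_rpow_div_four_rpow_lt_one {s a : ℝ} (hsa : s < 2 * a) :
    (2 : ℝ) ^ s / 4 ^ a < 1 := by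
  rw [div_lt_one (by positivity), show (4 : ℝ) = 2 ^ (2 : ℝ) by norm_num,
    ← Real.rpow_mul (by norm_num)]
  exact Real.rpow_lt_rpow_of_exponent_lt one_lt_two hsa

theorem dyadic_rpow_mul_rpow_eq {δ a s : ℝ} (hδ : 0 < δ) (j : ℕ) :
    (2 / (4 ^ j * δ)) ^ a * (2 * (2 ^ (j + 1) * δ)) ^ s =
      2 ^ a * 4 ^ s * δ ^ (s - a) * (2 ^ s / 4 ^ a) ^ j := by
  have h2 : (2 : ℝ) * (2 ^ (j + 1) * δ) = 4 * (2 ^ j * δ) := by ring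
  rw [h2, Real.div_rpow (by norm_num) (by positivity), Real.mul_rpow (by positivity) hδ.le,
    Real.mul_rpow (by norm_num) (by positivity), Real.mul_rpow (by positivity) hδ.le,
    ← Real.rpow_pow_comm (by norm_num), ← Real.rpow_pow_comm (by norm_num), div_pow,
    Real.rpow_sub hδ]
  field_simp

section PoissonRatio

variable {E : Type*} [NormedAddCommGroup E]

noncomputable def poissonRatio (x z : E) : ℝ := (1 - ‖x‖ ^ 2) / ‖z - x‖ ^ 2

theorem poissonRatio_bounds {x z : E} (hz : ‖z‖ = 1) (hx : ‖x‖ < 1) {r : ℝ} (hr : 0 < r)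
    (hrz : r ≤ ‖z - x‖) :
    (1 - ‖x‖) / 4 ≤ poissonRatio x z ∧ poissonRatio x z ≤ 2 * (1 - ‖x‖) / r ^ 2 := by
  have hzx : ‖z - x‖ ≤ 2 := by linarith [norm_sub_le z x]
  have hx0 := norm_nonneg x
  constructor
  · exact div_le_div₀ (by nlinarith) (by nlinarith) (by nlinarith [hr.trans_le hrz])
      (by nlinarith [norm_nonneg (z - x)])
  · exact div_le_div₀ (by positivity) (by nlinarith) (by positivity) (by gcongr)

theorem poissonRatio_rpow_mul_abs_log_le {x z : E} (hz : ‖z‖ = 1) (hx : ‖x‖ < 1) {a : ℝ}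
    (ha : 0 ≤ a) {j : ℕ} (hzj : z ∈ dyadicAnnulus x (1 - ‖x‖) j) :
    poissonRatio x z ^ a * |Real.log (poissonRatio x z)| ≤
      (2 / (4 ^ j * (1 - ‖x‖))) ^ a * Real.log (4 / (1 - ‖x‖)) := by
  set δ := 1 - ‖x‖ with hδ
  have hδ0 : 0 < δ := by linarith
  have hδ1 : δ ≤ 1 := by linarith [norm_nonneg x]
  have hzx : 2 ^ j * δ ≤ ‖z - x‖ := by
    simpa [dist_eq_norm] using hzj.2
  obtain ⟨hlo, hhi⟩ := poissonRatio_bounds hz hx (by positivity) hzx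
  rw [← hδ] at hlo hhi
  have h4j : (1 : ℝ) ≤ 4 ^ j := one_le_pow₀ (by norm_num)
  refine rpow_mul_abs_log_le ha ((by positivity : (0:ℝ) < δ / 4).trans_le hlo)
    (by rwa [inv_div]) (hhi.trans_eq ?_) ?_
  · rw [mul_pow, ← pow_mul, mul_comm j 2, pow_mul]
    field_simp
    norm_num
  · rw [div_le_div_iff₀ (by positivity) hδ0]
    nlinarith

variable [MeasurableSpace E] [OpensMeasurableSpace E]

theorem measurable_poissonRatio_rpow_mul_abs_log (x : E) (a : ℝ) :
    Measurable fun z => poissonRatio x z ^ a * |Real.log (poissonRatio x z)| := by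
  have hP : Measurable (poissonRatio x) :=
    ((continuous_sub_right x).norm.measurable.pow_const 2).const_div _
  exact (hP.pow_const a).mul (Real.measurable_log.comp hP).abs

theorem setLIntegral_dyadicAnnulus_le {μ : Measure E} {Λ : Set E} {K s a : ℝ} (ha : 0 ≤ a)
    (hΛ : Λ ⊆ sphere 0 1)
    (hμΛ : ∀ p ∈ Λ, ∀ r > (0:ℝ), μ (Λ ∩ ball p r) ≤ ENNReal.ofReal (K * r ^ s))
    {x : E} (hx : ‖x‖ < 1) (j : ℕ) :
    ∫⁻ z in dyadicAnnulus x (1 - ‖x‖) j,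
        ENNReal.ofReal (poissonRatio x z ^ a * |Real.log (poissonRatio x z)|) ∂μ.restrict Λ ≤
      ENNReal.ofReal ((2 / (4 ^ j * (1 - ‖x‖))) ^ a * Real.log (4 / (1 - ‖x‖))) *
        ENNReal.ofReal (K * (2 * (2 ^ (j + 1) * (1 - ‖x‖))) ^ s) := by
  have hA : MeasurableSet (dyadicAnnulus x (1 - ‖x‖) j) :=
    measurableSet_ball.diff measurableSet_ball
  -- `Λ` need not be measurable, so the pointwise bound is used on the sphere instead.
  have hsphere : ∀ᵐ z ∂μ.restrict Λ, z ∈ sphere (0 : E) 1 :=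
    ae_restrict_of_ae_restrict_of_subset hΛ (ae_restrict_mem isClosed_sphere.measurableSet)
  calc _ ≤ ∫⁻ _ in dyadicAnnulus x (1 - ‖x‖) j,
          ENNReal.ofReal ((2 / (4 ^ j * (1 - ‖x‖))) ^ a * Real.log (4 / (1 - ‖x‖)))
            ∂μ.restrict Λ := by
        refine setLIntegral_mono_ae' hA (hsphere.mono fun z hz hzj => ?_)
        exact ENNReal.ofReal_le_ofReal
          (poissonRatio_rpow_mul_abs_log_le (mem_sphere_zero_iff_norm.1 hz) hx ha hzj)
    _ = _ * μ (dyadicAnnulus x (1 - ‖x‖) j ∩ Λ) := by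
        rw [setLIntegral_const, Measure.restrict_apply hA]
    _ ≤ _ := by
        gcongr
        refine (measure_mono (t := Λ ∩ ball x _) fun z hz => ⟨hz.2, hz.1.1⟩).trans ?_
        exact measure_inter_ball_le_of_forall_mem_center hμΛ x
          (mul_pos (by positivity) (by linarith))

theorem integral_poissonRatio_rpow_mul_abs_log_le {μ : Measure E} {Λ : Set E} {K s a : ℝ}
    (hK : 0 ≤ K) (ha : 0 ≤ a) (hsa : s < 2 * a) (hΛ : Λ ⊆ sphere 0 1)
    (hμΛ : ∀ p ∈ Λ, ∀ r > (0:ℝ), μ (Λ ∩ ball p r) ≤ ENNReal.ofReal (K * r ^ s))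
    {x : E} (hx : ‖x‖ < 1) :
    ∫ z in Λ, poissonRatio x z ^ a * |Real.log (poissonRatio x z)| ∂μ ≤
      2 ^ a * 4 ^ s / (1 - 2 ^ s / 4 ^ a) * K * (1 - ‖x‖) ^ (s - a) *
        Real.log (4 / (1 - ‖x‖)) := by
  set δ := 1 - ‖x‖ with hδ
  have hδ0 : 0 < δ := by linarith
  have hL : 0 < Real.log (4 / δ) :=
    Real.log_pos ((one_lt_div hδ0).2 (by linarith [norm_nonneg x]))
  set q : ℝ := 2 ^ s / 4 ^ a
  have hq0 : 0 ≤ q := by positivity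
  have hq1 : q < 1 := two_rpow_div_four_rpow_lt_one hsa
  set C : ℝ := 2 ^ a * 4 ^ s * δ ^ (s - a) * Real.log (4 / δ) * K
  have hball : μ.restrict Λ (ball x δ) = 0 := by
    rw [Measure.restrict_apply measurableSet_ball, ← measure_empty (μ := μ)]
    congr 1
    refine Set.eq_empty_of_forall_notMem fun z ⟨hzx, hzΛ⟩ => ?_
    rw [mem_ball, dist_eq_norm] at hzx
    have := norm_sub_norm_le z x
    rw [mem_sphere_zero_iff_norm.1 (hΛ hzΛ)] at this
    linarith
  have hlint : ∫⁻ z, ENNReal.ofReal (poissonRatio x z ^ a * |Real.log (poissonRatio x z)|)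
      ∂μ.restrict Λ ≤ ENNReal.ofReal (C * (1 - q)⁻¹) :=
    calc _ ≤ ∑' j, ∫⁻ z in dyadicAnnulus x δ j,
            ENNReal.ofReal (poissonRatio x z ^ a * |Real.log (poissonRatio x z)|)
              ∂μ.restrict Λ :=
          lintegral_le_tsum_setLIntegral_dyadicAnnulus hδ0 hball _
      _ ≤ ∑' j : ℕ, ENNReal.ofReal ((2 / (4 ^ j * δ)) ^ a * Real.log (4 / δ)) *
            ENNReal.ofReal (K * (2 * (2 ^ (j + 1) * δ)) ^ s) :=
          ENNReal.tsum_le_tsum fun j => setLIntegral_dyadicAnnulus_le ha hΛ hμΛ hx j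
      _ = ∑' j : ℕ, ENNReal.ofReal (C * q ^ j) := by
          congr 1
          funext j
          rw [← ENNReal.ofReal_mul (by positivity)]
          congr 1
          linear_combination
            Real.log (4 / δ) * K * dyadic_rpow_mul_rpow_eq (a := a) (s := s) hδ0 j
      _ = ENNReal.ofReal (C * (1 - q)⁻¹) := by
          rw [← ENNReal.ofReal_tsum_of_nonneg (fun j => by positivity)
            ((summable_geometric_of_lt_one hq0 hq1).mul_left C), tsum_mul_left,
            tsum_geometric_of_lt_one hq0 hq1]
  have hP : ∀ z, 0 ≤ poissonRatio x z := fun z =>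
    div_nonneg (by nlinarith [norm_nonneg x]) (sq_nonneg _)
  rw [integral_eq_lintegral_of_nonneg_ae
    (ae_of_all _ fun z => mul_nonneg (Real.rpow_nonneg (hP z) a) (abs_nonneg _))
    (measurable_poissonRatio_rpow_mul_abs_log x a).aestronglyMeasurable]
  refine (ENNReal.toReal_le_of_le_ofReal (by positivity) hlint).trans_eq ?_
  ring

end PoissonRatio

theorem hausdorff_integral_bound_general (n : ℕ) (s : ℝ)
    (hs1 : ((n : ℝ) - 1) / 2 < s) (hs2 : s < (n : ℝ) - 1) :
    ∃ M > (0:ℝ), ∃ K₁ > (0:ℝ),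
      ∀ (Λ : Set (EuclideanSpace ℝ (Fin n))) (K : ℝ), 0 < K →
        Λ ⊆ sphere (0 : EuclideanSpace ℝ (Fin n)) 1 →
        μH[s] Λ < ⊤ →
        (∀ p ∈ Λ, ∀ r > (0:ℝ), μH[s] (Λ ∩ ball p r) ≤ ENNReal.ofReal (K * r ^ s)) →
        ∀ x : EuclideanSpace ℝ (Fin n), ‖x‖ < 1 →
          (∫ z in Λ, ((1 - ‖x‖ ^ 2) / ‖z - x‖ ^ 2) ^ (((n : ℝ) - 1) / 2) *
              |Real.log ((1 - ‖x‖ ^ 2) / ‖z - x‖ ^ 2)| ∂μH[s]) ≤ M * K ∧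
          (∫ z in Λ, ((1 - ‖x‖ ^ 2) / ‖z - x‖ ^ 2) ^ (((n : ℝ) - 1) / 2) *
              |Real.log ((1 - ‖x‖ ^ 2) / ‖z - x‖ ^ 2)| ∂μH[s]) ≤
            K₁ * K * (1 - ‖x‖) ^ (s - ((n : ℝ) - 1) / 2) *
              Real.log (128 / (1 - ‖x‖) ^ 3) := by
  set a : ℝ := ((n : ℝ) - 1) / 2
  have hsa : s < 2 * a := by simp only [a]; linarith
  have ha : 0 < a := by linarith
  set K₁ : ℝ := 2 ^ a * 4 ^ s / (1 - 2 ^ s / 4 ^ a)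
  have hK₁ : 0 < K₁ := div_pos (by positivity) (by linarith [two_rpow_div_four_rpow_lt_one hsa])
  refine ⟨K₁ * (Real.log 128 + 3 / (s - a)),
    mul_pos hK₁ (add_pos (Real.log_pos (by norm_num)) (div_pos three_pos (sub_pos.2 hs1))),
    K₁, hK₁, fun Λ K hK hΛ _ hμΛ x hx => ?_⟩
  set δ := 1 - ‖x‖
  have hδ0 : 0 < δ := by linarith
  have hδ1 : δ ≤ 1 := by linarith [norm_nonneg x]
  have hlog : Real.log (4 / δ) ≤ Real.log (128 / δ ^ 3) :=
    Real.log_le_log (by positivity) <| by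
      rw [div_le_div_iff₀ hδ0 (by positivity)]
      nlinarith [pow_le_one₀ hδ0.le hδ1 (n := 2)]
  have hbound : ∫ z in Λ, poissonRatio x z ^ a * |Real.log (poissonRatio x z)| ∂μH[s] ≤
      K₁ * K * δ ^ (s - a) * Real.log (128 / δ ^ 3) :=
    (integral_poissonRatio_rpow_mul_abs_log_le hK.le ha.le hsa hΛ hμΛ hx).trans (by gcongr)
  refine ⟨hbound.trans ?_, hbound⟩
  calc K₁ * K * δ ^ (s - a) * Real.log (128 / δ ^ 3)
      = K₁ * K * (δ ^ (s - a) * Real.log (128 / δ ^ 3)) := by ring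
    _ ≤ K₁ * K * (Real.log 128 + 3 / (s - a)) := by
        gcongr
        exact rpow_mul_log_div_pow_le hδ0 hδ1 (by linarith)
    _ = K₁ * (Real.log 128 + 3 / (s - a)) * K := by ring

/-- For `s ∈ ((n-1)/2, n-1)` and `Λ ⊂ ∂B` with finite `H^s` measure satisfying the Ahlfors-type
upper bound `H^s(Λ ∩ B_r(p)) ≤ K r^s`, the integral
`∫_Λ ((1-|x|²)/|z-x|²)^{(n-1)/2} |ln((1-|x|²)/|z-x|²)| dH^s(z)` is at most `M·K` for all `x ∈ B`,
with `M = M(n,s)`; moreover it is bounded by `K₁·K·δ^{s-(n-1)/2}·ln(128/δ³)` with `δ = 1-|x|`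
and `K₁ = K₁(n,s)`. -/
theorem hausdorff_integral_bound (n : ℕ) (hn : 2 ≤ n) (s : ℝ)
    (hs1 : ((n : ℝ) - 1) / 2 < s) (hs2 : s < (n : ℝ) - 1) :
    ∃ M > (0:ℝ), ∃ K₁ > (0:ℝ),
      ∀ (Λ : Set (EuclideanSpace ℝ (Fin n))) (K : ℝ), 0 < K →
        Λ ⊆ sphere (0 : EuclideanSpace ℝ (Fin n)) 1 →
        μH[s] Λ < ⊤ →
        (∀ p ∈ Λ, ∀ r > (0:ℝ), μH[s] (Λ ∩ ball p r) ≤ ENNReal.ofReal (K * r ^ s)) →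
        ∀ x : EuclideanSpace ℝ (Fin n), ‖x‖ < 1 →
          (∫ z in Λ, ((1 - ‖x‖ ^ 2) / ‖z - x‖ ^ 2) ^ (((n : ℝ) - 1) / 2) *
              |Real.log ((1 - ‖x‖ ^ 2) / ‖z - x‖ ^ 2)| ∂μH[s]) ≤ M * K ∧
          (∫ z in Λ, ((1 - ‖x‖ ^ 2) / ‖z - x‖ ^ 2) ^ (((n : ℝ) - 1) / 2) *
              |Real.log ((1 - ‖x‖ ^ 2) / ‖z - x‖ ^ 2)| ∂μH[s]) ≤
            K₁ * K * (1 - ‖x‖) ^ (s - ((n : ℝ) - 1) / 2) *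
              Real.log (128 / (1 - ‖x‖) ^ 3) :=
  hausdorff_integral_bound_general n s hs1 hs2
end
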